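/- arXiv:2407.18436 — 2 statements merged into one kernel-verified Lean document; each statement's English description precedes it below -/
import Mathlib

section
/- Model image generation by a stack discipline: scanning left to right, an object instance is pushed when it begins and popped when it ends, and every pixel is attributed to the top of stack (background when the stack is empty); valid generations have object intervals forming a laminar (properly nested) family relative to visibility. If objects are w-well-structured and a contiguous image segment of length ℓ exactly matches ℓ consecutive pixels of a single object o, and two pixels i < j of the segment are produced by the same instance of o, then every pixel q with i ≤ q ≤ j is produced by that same instance of o. -/
/-- Object `i`, placed with left endpoint `a`, covers canvas position `x`. -/
def Covers {m : ℕ} (len : Fin m → ℕ) (i : Fin m) (a x : ℤ) : Prop :=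
  a ≤ x ∧ x < a + len i

/-- The pixel of object `i` (placed at `a`) lying over position `x` has color `v`. -/
def ObjAt {m c : ℕ} (len : Fin m → ℕ) (obj : ∀ i : Fin m, Fin (len i) → Fin c)
    (i : Fin m) (a x : ℤ) (v : Fin c) : Prop :=
  ∃ s : Fin (len i), a + (s : ℤ) = x ∧ obj i s = v

def WellStructured (m c w : ℕ) (len : Fin m → ℕ)
    (o : ∀ i : Fin m, Fin (len i) → Fin c) : Prop :=
  (∀ i, w ≤ len i) ∧
  ∀ (i j : Fin m) (p q : ℕ) (hp : p + w ≤ len i) (hq : q + w ≤ len j),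
    (i ≠ j ∨ p ≠ q) →
    ¬ ∀ t : Fin w,
        o i ⟨p + t, lt_of_lt_of_le (Nat.add_lt_add_left t.isLt p) hp⟩ =
        o j ⟨q + t, lt_of_lt_of_le (Nat.add_lt_add_left t.isLt q) hq⟩

/-- Instance `r` (object `ι r` placed at `pos r`, depth equal to index: smaller index
means more in front) produces the pixel at canvas position `x`: it covers `x` and no
instance in front of it covers `x`. -/
def Produced {m : ℕ} (len : Fin m → ℕ) {n : ℕ} (ι : Fin n → Fin m)
    (pos : Fin n → ℤ) (r : Fin n) (x : ℤ) : Prop :=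
  Covers len (ι r) (pos r) x ∧ ∀ r' : Fin n, r' < r → ¬ Covers len (ι r') (pos r') x

/-- Stack discipline / contiguity lemma: with `w`-well-structured objects, if the
image segment `[u, u+ℓ)` exactly matches the `ℓ` consecutive pixels of object `o`
starting at `p`, and two positions `x₁ ≤ x₂` of the segment are produced by the same
instance `r₀` of `o`, then every position between `x₁` and `x₂` is produced by that
same instance of `o`. -/
theorem stmt_15 (m c w : ℕ) (hw : 0 < w)
    (len : Fin m → ℕ) (obj : ∀ i : Fin m, Fin (len i) → Fin c)
    (hws : WellStructured m c w len obj)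
    (n : ℕ) (ι : Fin n → Fin m) (hι : Function.Injective ι) (pos : Fin n → ℤ)
    (ℓ : ℕ) (u : ℤ) (o : Fin m) (p : ℕ) (hp : p + ℓ ≤ len o)
    (hmatch : ∀ x : Fin ℓ, ∃ r : Fin n, Produced len ι pos r (u + (x : ℕ)) ∧
        ObjAt len obj (ι r) (pos r) (u + (x : ℕ))
          (obj o ⟨p + x, lt_of_lt_of_le (Nat.add_lt_add_left x.isLt p) hp⟩))
    (r0 : Fin n) (ho : ι r0 = o) (x1 x2 : ℤ)
    (h1 : Produced len ι pos r0 x1) (h2 : Produced len ι pos r0 x2)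
    (hux1 : u ≤ x1) (h12 : x1 ≤ x2) (hx2 : x2 < u + ℓ) :
    ∀ q : ℤ, x1 ≤ q → q ≤ x2 → Produced len ι pos r0 q := by
  intro q hq1 hq2
  refine ⟨⟨le_trans h1.1.1 hq1, lt_of_le_of_lt hq2 h2.1.2⟩, ?_⟩
  intro r' hr' hcov
  classical
  obtain ⟨hwlen, hdist⟩ := hws
  set P : Fin n → Prop := fun r'' => r'' < r0 ∧
      ∃ y, x1 ≤ y ∧ y ≤ x2 ∧ Covers len (ι r'') (pos r'') y with hP
  obtain ⟨rs, hmem, hmin⟩ := Finset.exists_min_image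
      (Finset.univ.filter P) id ⟨r', by simp [hP]; exact ⟨hr', q, hq1, hq2, hcov⟩⟩
  rw [Finset.mem_filter] at hmem
  obtain ⟨-, hrslt, y, hy1, hy2, hycov⟩ := hmem
  have hposx1 : x1 < pos rs := by
    by_contra h
    push_neg at h
    exact h1.2 rs hrslt ⟨h, lt_of_le_of_lt hy1 hycov.2⟩
  have hend : pos rs + (len (ι rs) : ℤ) ≤ x2 := by
    by_contra h
    push_neg at h
    exact h2.2 rs hrslt ⟨le_trans hycov.1 hy2, h⟩
  have hwle : w ≤ len (ι rs) := hwlen (ι rs)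
  set D : ℕ := (pos rs - u).toNat with hDdef
  have hDval : (D : ℤ) = pos rs - u := Int.toNat_of_nonneg (by omega)
  have hDpos : 1 ≤ D := by omega
  have hDw : D + w < ℓ := by
    have h1' : (w : ℤ) ≤ (len (ι rs) : ℤ) := by exact_mod_cast hwle
    omega
  have hp0 : 0 + w ≤ len (ι rs) := by omega
  have hq0 : (p + D) + w ≤ len o := by omega
  have key : ∀ t : Fin w,
      obj (ι rs) ⟨0 + t, lt_of_lt_of_le (Nat.add_lt_add_left t.isLt 0) hp0⟩ =
      obj o ⟨(p + D) + t, lt_of_lt_of_le (Nat.add_lt_add_left t.isLt (p + D)) hq0⟩ := by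
    intro t
    have htw : (t : ℕ) < w := t.isLt
    have hdlt : D + (t : ℕ) < ℓ := by omega
    obtain ⟨r, ⟨hrcov, hrtop⟩, s, hs, hsv⟩ := hmatch ⟨D + t, hdlt⟩
    have hx : (u + ((D + (t : ℕ) : ℕ) : ℤ)) = pos rs + (t : ℕ) := by push_cast; omega
    -- rs produces this position
    have hrscov : Covers len (ι rs) (pos rs) (u + ((D + (t : ℕ) : ℕ) : ℤ)) := by
      constructor
      · rw [hx]; omega
      · rw [hx]; push_cast; omega
    have hrsprod : ∀ r'' : Fin n, r'' < rs →
        ¬ Covers len (ι r'') (pos r'') (u + ((D + (t : ℕ) : ℕ) : ℤ)) := by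
      intro r'' hlt hcov''
      have hmem'' : r'' ∈ Finset.univ.filter P := by
        rw [Finset.mem_filter]
        refine ⟨Finset.mem_univ _, lt_trans hlt hrslt, u + ((D + (t : ℕ) : ℕ) : ℤ), ?_, ?_, hcov''⟩
        · omega
        · push_cast; omega
      exact absurd (hmin r'' hmem'') (by simpa using hlt)
    have hreq : r = rs := by
      have h1'' : ¬ r < rs := fun h => hrsprod r h hrcov
      have h2'' : ¬ rs < r := fun h => hrtop rs h hrscov
      omega
    subst hreq
    have hsval : (s : ℕ) = (t : ℕ) := by
      have h3 : pos r + (s : ℤ) = pos r + ((t : ℕ) : ℤ) := by rw [hs, hx]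
      omega
    have e1 : (⟨0 + t, lt_of_lt_of_le (Nat.add_lt_add_left t.isLt 0) hp0⟩ : Fin (len (ι r))) = s :=
      Fin.ext (by simp; omega)
    have e2 : (⟨(p + D) + t, lt_of_lt_of_le (Nat.add_lt_add_left t.isLt (p + D)) hq0⟩ : Fin (len o)) =
        ⟨p + (D + t), lt_of_lt_of_le (Nat.add_lt_add_left (Fin.isLt ⟨D + t, hdlt⟩) p) hp⟩ :=
      Fin.ext (by simp; omega)
    rw [e1, e2]
    exact hsv
  exact hdist (ι rs) o 0 (p + D) hp0 hq0 (Or.inr (by omega)) key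
end

section
/- Assume objects are w-well-structured and at most k object instances appear in an image. If a contiguous segment of the image of length ℓ ≥ 2wk+1 exactly matches ℓ consecutive pixels of a single object o, then the middle ℓ - 2(w-1)k pixels of that segment form a pure segment truly produced by a single instance of object o. -/
/-! An instance is *aligned* if it is `o` placed so that it reproduces the whole segment.
By well-structuredness, an instance showing the segment's colors at `w` consecutive positions
is aligned. A non-aligned instance `r` producing `x` covers a window of `w` positions around
`x`, not all of which it produces, so an instance in front of `r` produces a position within
`w - 1` of `x`. Induction on depth then puts every position with a non-aligned producer of
depth `r` within `(w - 1)(r + 1)` of an end of the segment. Hence every middle position is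
produced by an aligned instance, and two aligned instances that produce anything coincide. -/

def SameColorAt {m c : ℕ} (len : Fin m → ℕ) (obj : ∀ i : Fin m, Fin (len i) → Fin c)
    (i : Fin m) (a : ℤ) (j : Fin m) (b x : ℤ) : Prop :=
  ∃ (s : Fin (len i)) (t : Fin (len j)), a + s = x ∧ b + t = x ∧ obj i s = obj j t

def SegmentMatches {m c n : ℕ} (len : Fin m → ℕ) (obj : ∀ i : Fin m, Fin (len i) → Fin c)
    (ι : Fin n → Fin m) (pos : Fin n → ℤ) (j : Fin m) (b u v : ℤ) : Prop :=
  ∀ x, u ≤ x → x < v → ∃ r, Produced len ι pos r x ∧ SameColorAt len obj (ι r) (pos r) j b x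

section

variable {m c n : ℕ} {len : Fin m → ℕ} {obj : ∀ i : Fin m, Fin (len i) → Fin c}
  {ι : Fin n → Fin m} {pos : Fin n → ℤ}

theorem Produced.le_of_covers {r r' : Fin n} {x : ℤ} (hr : Produced len ι pos r x)
    (hr' : Covers len (ι r') (pos r') x) : r ≤ r' :=
  not_lt.1 fun hlt => hr.2 r' hlt hr'

theorem Produced.unique {r r' : Fin n} {x : ℤ} (hr : Produced len ι pos r x)
    (hr' : Produced len ι pos r' x) : r = r' :=
  le_antisymm (hr.le_of_covers hr'.1) (hr'.le_of_covers hr.1)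

theorem Produced.eq_of_placement_eq {r₁ r₂ : Fin n} {x₁ x₂ : ℤ}
    (h₁ : Produced len ι pos r₁ x₁) (h₂ : Produced len ι pos r₂ x₂)
    (hι : ι r₁ = ι r₂) (hpos : pos r₁ = pos r₂) : r₁ = r₂ :=
  le_antisymm (h₁.le_of_covers (hι ▸ hpos ▸ h₁.1)) (h₂.le_of_covers (hι ▸ hpos ▸ h₂.1))

theorem SameColorAt.covers_right {i j : Fin m} {a b x : ℤ}
    (h : SameColorAt len obj i a j b x) : Covers len j b x := by
  obtain ⟨-, t, -, ht, -⟩ := h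
  exact ⟨by omega, by omega⟩

theorem WellStructured.eq_of_sameColorAt {w : ℕ} (hws : WellStructured m c w len obj)
    (hw : 0 < w) {i j : Fin m} {a b z : ℤ}
    (h : ∀ x, z ≤ x → x < z + w → SameColorAt len obj i a j b x) : i = j ∧ a = b := by
  obtain ⟨s₀, t₀, hs₀, ht₀, -⟩ := h z le_rfl (by omega)
  obtain ⟨s₁, t₁, hs₁, ht₁, -⟩ := h (z + (w - 1)) (by omega) (by omega)
  have hi : (s₀ : ℕ) + w ≤ len i := by have := s₁.isLt; omega
  have hj : (t₀ : ℕ) + w ≤ len j := by have := t₁.isLt; omega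
  by_contra hne
  refine hws.2 i j s₀ t₀ hi hj ?_ fun t => ?_
  · by_cases hij : i = j
    · exact Or.inr fun hst => hne ⟨hij, by omega⟩
    · exact Or.inl hij
  · obtain ⟨s, t', hs, ht, hst⟩ := h (z + t) (by omega) (by omega)
    convert hst using 2 <;> ext <;> dsimp only <;> omega

theorem SegmentMatches.sameColorAt_of_produced {j : Fin m} {b u v x : ℤ} {r : Fin n}
    (hmatch : SegmentMatches len obj ι pos j b u v) (hu : u ≤ x) (hv : x < v)
    (hr : Produced len ι pos r x) : SameColorAt len obj (ι r) (pos r) j b x := by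
  obtain ⟨r', hr', hcol⟩ := hmatch x hu hv
  rwa [hr.unique hr']

theorem SegmentMatches.covers {j : Fin m} {b u v x : ℤ}
    (hmatch : SegmentMatches len obj ι pos j b u v) (hu : u ≤ x) (hv : x < v) :
    Covers len j b x := by
  obtain ⟨_, _, hcol⟩ := hmatch x hu hv
  exact hcol.covers_right

theorem SegmentMatches.exists_front_producer {w : ℕ} (hws : WellStructured m c w len obj)
    (hw : 0 < w) {j : Fin m} {b u v x : ℤ} {r : Fin n}
    (hmatch : SegmentMatches len obj ι pos j b u v) (hr : Produced len ι pos r x)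
    (hne : ¬(ι r = j ∧ pos r = b)) (hu : u + (w - 1) ≤ x) (hv : x + (w - 1) < v) :
    ∃ z r', x - (w - 1) ≤ z ∧ z ≤ x + (w - 1) ∧ u ≤ z ∧ z < v ∧ r' < r ∧
      Produced len ι pos r' z := by
  have hlen : (w : ℤ) ≤ len (ι r) := by exact_mod_cast hws.1 (ι r)
  obtain ⟨hrx₁, hrx₂⟩ := hr.1
  -- a window of `w` positions around `x`, inside the segment, all covered by `r`
  set z₀ := max (x - (w - 1)) (pos r)
  have hwindow : ∀ z, z₀ ≤ z → z < z₀ + w → Covers len (ι r) (pos r) z := fun z h₁ h₂ =>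
    ⟨by omega, by omega⟩
  by_contra! hno
  refine hne (hws.eq_of_sameColorAt hw (z := z₀) fun z h₁ h₂ => ?_)
  obtain ⟨r', hr', -⟩ := hmatch z (by omega) (by omega)
  obtain rfl : r' = r :=
    le_antisymm (hr'.le_of_covers (hwindow z h₁ h₂)) (not_lt.1 fun hlt =>
      hno z r' (by omega) (by omega) (by omega) (by omega) hlt hr')
  exact hmatch.sameColorAt_of_produced (by omega) (by omega) hr'

theorem SegmentMatches.placement_eq_or_near_end {w : ℕ} (hws : WellStructured m c w len obj)
    (hw : 0 < w) {j : Fin m} {b u v : ℤ} (hmatch : SegmentMatches len obj ι pos j b u v)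
    (r : Fin n) {x : ℤ} (hu : u ≤ x) (hv : x < v) (hr : Produced len ι pos r x) :
    (ι r = j ∧ pos r = b) ∨ x < u + (w - 1) * ((r : ℕ) + 1) ∨
      v ≤ x + (w - 1) * ((r : ℕ) + 1) := by
  induction r using WellFoundedLT.induction generalizing x with
  | _ r ih =>
  by_contra! ⟨hne, hleft, hright⟩
  have hstep : (w - 1 : ℤ) ≤ (w - 1) * ((r : ℕ) + 1) := le_mul_of_one_le_right (by omega) (by omega)
  obtain ⟨z, r', hz₁, hz₂, hzu, hzv, hlt, hr'⟩ :=
    hmatch.exists_front_producer hws hw hr (fun h => hne h.1 h.2) (by linarith) (by linarith)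
  have hdepth : (w - 1 : ℤ) * ((r' : ℕ) + 1) ≤ (w - 1) * (r : ℕ) :=
    mul_le_mul_of_nonneg_left (by exact_mod_cast hlt) (by omega)
  rcases ih r' hlt hzu hzv hr' with ⟨hι, hpos⟩ | hnear | hnear
  · -- an aligned instance covers `x`, so it cannot lie in front of the producer of `x`
    exact absurd (hr.le_of_covers (hι ▸ hpos ▸ hmatch.covers hu hv)) (not_le.2 hlt)
  · linarith
  · linarith

theorem segmentMatches_of_objAt {ℓ p : ℕ} {o : Fin m} {u : ℤ} (hp : p + ℓ ≤ len o)
    (hmatch : ∀ x : Fin ℓ, ∃ r : Fin n, Produced len ι pos r (u + (x : ℕ)) ∧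
        ObjAt len obj (ι r) (pos r) (u + (x : ℕ))
          (obj o ⟨p + x, lt_of_lt_of_le (Nat.add_lt_add_left x.isLt p) hp⟩)) :
    SegmentMatches len obj ι pos o (u - p) u (u + ℓ) := by
  intro x hu hv
  obtain ⟨y, rfl⟩ : ∃ y : ℕ, x = u + y := ⟨(x - u).toNat, by omega⟩
  obtain ⟨r, hr, s, hs, hcol⟩ := hmatch ⟨y, by omega⟩
  exact ⟨r, hr, s, _, hs, by push_cast; ring, hcol⟩

end

theorem stmt_16_general (m c w k : ℕ) (hw : 0 < w)
    (len : Fin m → ℕ) (obj : ∀ i : Fin m, Fin (len i) → Fin c)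
    (hws : WellStructured m c w len obj)
    (n : ℕ) (hn : n ≤ k) (ι : Fin n → Fin m)
    (pos : Fin n → ℤ)
    (ℓ : ℕ) (hℓ : 2 * w * k + 1 ≤ ℓ)
    (u : ℤ) (o : Fin m) (p : ℕ) (hp : p + ℓ ≤ len o)
    (hmatch : ∀ x : Fin ℓ, ∃ r : Fin n, Produced len ι pos r (u + (x : ℕ)) ∧
        ObjAt len obj (ι r) (pos r) (u + (x : ℕ))
          (obj o ⟨p + x, lt_of_lt_of_le (Nat.add_lt_add_left x.isLt p) hp⟩)) :
    ∃ r : Fin n, ι r = o ∧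
      ∀ q : ℤ, u + ((w - 1) * k : ℕ) ≤ q → q < u + (ℓ : ℤ) - ((w - 1) * k : ℕ) →
        Produced len ι pos r q := by
  have hseg := segmentMatches_of_objAt hp hmatch
  have hmargin : (((w - 1) * k : ℕ) : ℤ) = (w - 1) * k := by push_cast [Nat.cast_sub hw]; ring
  rw [hmargin]
  have hmargin_nonneg : 0 ≤ (w - 1 : ℤ) * k := mul_nonneg (by omega) (by positivity)
  have hlong : 2 * ((w - 1 : ℤ) * k) < ℓ := by
    have : (2 * w * k + 1 : ℤ) ≤ ℓ := by exact_mod_cast hℓ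
    nlinarith
  have haligned : ∀ q : ℤ, u + (w - 1) * k ≤ q → q < u + ℓ - (w - 1) * k →
      ∀ r, Produced len ι pos r q → ι r = o ∧ pos r = u - p := by
    intro q hq₁ hq₂ r hr
    have hdepth : (w - 1 : ℤ) * ((r : ℕ) + 1) ≤ (w - 1) * k :=
      mul_le_mul_of_nonneg_left (by exact_mod_cast r.isLt.trans_le hn) (by omega)
    refine (hseg.placement_eq_or_near_end hws hw r (by linarith) (by linarith) hr).resolve_right ?_
    rintro (h | h) <;> linarith
  obtain ⟨r, hr, -⟩ := hseg (u + (w - 1) * k) (by linarith) (by linarith)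
  obtain ⟨hιr, hposr⟩ := haligned _ le_rfl (by linarith) r hr
  refine ⟨r, hιr, fun q hq₁ hq₂ => ?_⟩
  obtain ⟨r', hr', -⟩ := hseg q (by linarith) (by linarith)
  obtain ⟨hιr', hposr'⟩ := haligned q hq₁ hq₂ r' hr'
  rwa [hr.eq_of_placement_eq hr' (hιr.trans hιr'.symm) (hposr.trans hposr'.symm)]

/-- Signature detection: with `w`-well-structured objects and at most `k` object
instances in the image, if a contiguous image segment `[u, u+ℓ)` of length
`ℓ ≥ 2wk + 1` exactly matches `ℓ` consecutive pixels of a single object `o` (starting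
at `p`), then the middle `ℓ - 2(w-1)k` positions of the segment are all truly produced
by one single instance of object `o`. -/
theorem stmt_16 (m c w k : ℕ) (hw : 0 < w)
    (len : Fin m → ℕ) (obj : ∀ i : Fin m, Fin (len i) → Fin c)
    (hws : WellStructured m c w len obj)
    (n : ℕ) (hn : n ≤ k) (ι : Fin n → Fin m) (hι : Function.Injective ι)
    (pos : Fin n → ℤ)
    (ℓ : ℕ) (hℓ : 2 * w * k + 1 ≤ ℓ)
    (u : ℤ) (o : Fin m) (p : ℕ) (hp : p + ℓ ≤ len o)
    (hmatch : ∀ x : Fin ℓ, ∃ r : Fin n, Produced len ι pos r (u + (x : ℕ)) ∧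
        ObjAt len obj (ι r) (pos r) (u + (x : ℕ))
          (obj o ⟨p + x, lt_of_lt_of_le (Nat.add_lt_add_left x.isLt p) hp⟩)) :
    ∃ r : Fin n, ι r = o ∧
      ∀ q : ℤ, u + ((w - 1) * k : ℕ) ≤ q → q < u + (ℓ : ℤ) - ((w - 1) * k : ℕ) →
        Produced len ι pos r q :=
  stmt_16_general m c w k hw len obj hws n hn ι pos ℓ hℓ u o p hp hmatch
end
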